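/- (Oscillations grow) Along one oscillation period of the four-device system with g < 0, the voltage difference strictly increases: v^diff[k₄] − v^diff[k₀] = (η − 1)(Δv₂ − Δv₁) > 0, where Δv₂ < 0 is the cumulative change from inverter 2 acting on its own node (undervoltage case) and Δv₁ > 0 is the cumulative change from inverter 1 acting on its own node (overvoltage case), and 0 < η < 1. -/

import Mathlib

theorem stmt14_general (η vL Δv1 Δv2 : ℝ) (hη1 : η < 1)
    (hΔ2 : Δv2 < 0) (hΔ1 : 0 < Δv1)
    (v1k0 v2k0 v1k4 v2k4 : ℝ)
    (h1 : v1k4 = v1k0 + η * Δv2 + vL + Δv1 - vL)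
    (h2 : v2k4 = v2k0 + Δv2 + vL + η * Δv1 - vL) :
    (v1k4 - v2k4) - (v1k0 - v2k0) = (η - 1) * (Δv2 - Δv1) ∧
    v1k0 - v2k0 < v1k4 - v2k4 := by
  have hdiff : (v1k4 - v2k4) - (v1k0 - v2k0) = (η - 1) * (Δv2 - Δv1) := by
    subst h1 h2; ring
  have hgrowth : 0 < (η - 1) * (Δv2 - Δv1) :=
    mul_pos_of_neg_of_neg (by linarith) (by linarith)
  exact ⟨hdiff, sub_pos.mp (hdiff ▸ hgrowth)⟩

/-- Oscillations grow: over one oscillation period of the four-device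
system with `g < 0` (inverter 2 acts with own-node change `Δv₂ < 0`, LTC2 taps up,
inverter 1 acts with own-node change `Δv₁ > 0`, LTC1 taps down; coupling damped by
`0 < η < 1`), the voltage difference `v^diff = v₁ - v₂` strictly increases, with
`v^diff[k₄] - v^diff[k₀] = (η - 1)(Δv₂ - Δv₁) > 0`. -/
theorem stmt14 (η vL Δv1 Δv2 : ℝ) (hη : 0 < η) (hη1 : η < 1)
    (hΔ2 : Δv2 < 0) (hΔ1 : 0 < Δv1)
    (v1k0 v2k0 v1k4 v2k4 : ℝ)
    (h1 : v1k4 = v1k0 + η * Δv2 + vL + Δv1 - vL)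
    (h2 : v2k4 = v2k0 + Δv2 + vL + η * Δv1 - vL) :
    (v1k4 - v2k4) - (v1k0 - v2k0) = (η - 1) * (Δv2 - Δv1) ∧
    v1k0 - v2k0 < v1k4 - v2k4 :=
  stmt14_general η vL Δv1 Δv2 hη1 hΔ2 hΔ1 v1k0 v2k0 v1k4 v2k4 h1 h2
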